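/- arXiv:1710.10900 — 3 statements merged into one kernel-verified Lean document; each statement's English description precedes it below -/
import Mathlib

section
/- Let k ≥ 2 and fix a (k+1)-colouring of the complete symmetric digraph on ℕ⁺ with colours c₁,...,c_{k+1} such that for every t ∈ {1,...,k} there is no c_t-coloured directed path with r_t edges. Then there exists a directed path of colour c_{k+1} with upper density at least ∏_{t=1}^k (1/r_t). -/
open Filter

open scoped Classical in
/-- Upper density of a set of naturals: `limsup |A ∩ {1,...,n}| / n`. -/
noncomputable def upDens (A : Set ℕ) : ℝ :=
  limsup (fun n : ℕ => (((Finset.Icc 1 n).filter (fun m => m ∈ A)).card : ℝ) / n) atTop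

def red : Bool := true
def blue : Bool := false

/-- A finite directed path (list of distinct positive integers) all of whose
consecutive edges have colour `col` under the edge-colouring `c`. -/
def FinPath (c : ℕ → ℕ → Bool) (col : Bool) (l : List ℕ) : Prop :=
  l.Nodup ∧ (∀ v ∈ l, 0 < v) ∧ l.Chain' (fun a b => c a b = col)

/-- An infinite directed path of colour `col` under the edge-colouring `c`. -/
def InfPath (c : ℕ → ℕ → Bool) (col : Bool) (f : ℕ → ℕ) : Prop :=
  Function.Injective f ∧ (∀ j, 0 < f j) ∧ ∀ j, c (f j) (f (j + 1)) = col

/-- There is no directed path of colour `col` with `r` edges (i.e. `r+1` vertices). -/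
def NoPathOfLength (c : ℕ → ℕ → Bool) (col : Bool) (r : ℕ) : Prop :=
  ¬ ∃ l : List ℕ, FinPath c col l ∧ l.length = r + 1

/-- There is a directed path of colour `col` with `k` edges starting at `v`. -/
def PathFrom (c : ℕ → ℕ → Bool) (col : Bool) (v k : ℕ) : Prop :=
  ∃ l : List ℕ, FinPath c col l ∧ l.head? = some v ∧ l.length = k + 1

/-- `v ∈ A_i`: the longest red directed path starting at `v` has exactly `i` edges. -/
def Level (c : ℕ → ℕ → Bool) (v i : ℕ) : Prop :=
  PathFrom c red v i ∧ ¬ PathFrom c red v (i + 1)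

/-- A finite directed path all of whose consecutive edges have colour `col` under
the colouring `c` (colours are naturals `0,...,k`). -/
def FinPathN (c : ℕ → ℕ → ℕ) (col : ℕ) (l : List ℕ) : Prop :=
  l.Nodup ∧ (∀ v ∈ l, 0 < v) ∧ l.Chain' (fun a b => c a b = col)

/-- An infinite directed path of colour `col` under the colouring `c`. -/
def InfPathN (c : ℕ → ℕ → ℕ) (col : ℕ) (f : ℕ → ℕ) : Prop :=
  Function.Injective f ∧ (∀ j, 0 < f j) ∧ ∀ j, c (f j) (f (j + 1)) = col

/-! ### Auxiliary material -/

section Aux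

open Relation List

/-- Acyclicity of a relation. -/
def Acyc (E : ℕ → ℕ → Prop) : Prop := ∀ v, ¬ Relation.TransGen E v v

lemma chain'_transGen {E : ℕ → ℕ → Prop} {l : List ℕ} (hl : List.Chain' E l) :
    ∀ (i j : ℕ) (hij : i < j) (hj : j < l.length),
      Relation.TransGen E (l.get ⟨i, by omega⟩) (l.get ⟨j, hj⟩) := by
  intro i j
  induction j with
  | zero => omega
  | succ j ih =>
    intro hij hj
    have hstep : E (l.get ⟨j, by omega⟩) (l.get ⟨j + 1, hj⟩) := by
      have := List.isChain_iff_getElem.1 hl j (by omega)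
      exact this
    rcases Nat.lt_or_ge i j with hij' | hij'
    · exact (ih hij' (by omega)).tail hstep
    · have : i = j := by omega
      subst this
      exact Relation.TransGen.single hstep

lemma nodup_of_chain' {E : ℕ → ℕ → Prop} (hE : Acyc E) {l : List ℕ}
    (hl : List.Chain' E l) : l.Nodup := by
  rw [List.nodup_iff_injective_get]
  intro i j hij
  by_contra hne
  rcases lt_trichotomy (i : ℕ) (j : ℕ) with hlt | heq | hlt
  · have h1 := chain'_transGen hl i j hlt j.isLt
    simp only [Fin.eta] at h1
    rw [hij] at h1
    exact hE _ h1
  · exact hne (Fin.ext heq)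
  · have h1 := chain'_transGen hl j i hlt i.isLt
    simp only [Fin.eta] at h1
    rw [hij] at h1
    exact hE _ h1

lemma transGen_sUnion {c : Set (Set (ℕ × ℕ))} (hc : IsChain (· ⊆ ·) c) {x y : ℕ}
    (h : Relation.TransGen (fun a b => (a, b) ∈ ⋃₀ c) x y) :
    ∃ s ∈ c, Relation.TransGen (fun a b => (a, b) ∈ s) x y := by
  induction h with
  | single hxy =>
    obtain ⟨s, hs, hmem⟩ := hxy
    exact ⟨s, hs, Relation.TransGen.single hmem⟩
  | tail _ hbc ih =>
    obtain ⟨s, hs, hts⟩ := ih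
    obtain ⟨s', hs', hmem⟩ := hbc
    rcases hc.total hs hs' with hsub | hsub
    · exact ⟨s', hs', (TransGen.mono (fun a b hab => hsub hab) _ _ hts).tail hmem⟩
    · exact ⟨s, hs, hts.tail (hsub hmem)⟩

lemma exists_max_acyclic (D : Set (ℕ × ℕ)) :
    ∃ E, E ⊆ D ∧ Acyc (fun a b => (a, b) ∈ E) ∧
      ∀ p ∈ D, p ∉ E → ¬ Acyc (fun a b => (a, b) ∈ insert p E) := by
  have hz := zorn_subset {E : Set (ℕ × ℕ) | E ⊆ D ∧ Acyc (fun a b => (a, b) ∈ E)} ?_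
  · obtain ⟨E, hE⟩ := hz
    refine ⟨E, hE.prop.1, hE.prop.2, ?_⟩
    intro p hp hpE hac
    have : insert p E ∈ {E : Set (ℕ × ℕ) | E ⊆ D ∧ Acyc (fun a b => (a, b) ∈ E)} :=
      ⟨Set.insert_subset hp hE.prop.1, hac⟩
    exact hpE (hE.le_of_ge this (Set.subset_insert p E) (Set.mem_insert p E))
  · intro ch hch hchain
    refine ⟨⋃₀ ch, ⟨?_, ?_⟩, fun s hs => Set.subset_sUnion_of_mem hs⟩
    · exact Set.sUnion_subset fun s hs => (hch hs).1
    · intro v hv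
      obtain ⟨s, hs, hts⟩ := transGen_sUnion hchain hv
      exact (hch hs).2 v hts

lemma transGen_insert {E : ℕ → ℕ → Prop} {u v a b : ℕ}
    (h : Relation.TransGen (fun x y => E x y ∨ (x = u ∧ y = v)) a b) :
    Relation.TransGen E a b ∨
      (Relation.ReflTransGen E a u ∧ Relation.ReflTransGen E v b) := by
  induction h with
  | single hab =>
    rcases hab with hab | ⟨rfl, rfl⟩
    · exact Or.inl (Relation.TransGen.single hab)
    · exact Or.inr ⟨Relation.ReflTransGen.refl, Relation.ReflTransGen.refl⟩
  | tail _ hbc ih =>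
    rcases hbc with hbc | ⟨rfl, rfl⟩
    · rcases ih with h1 | ⟨h1, h2⟩
      · exact Or.inl (h1.tail hbc)
      · exact Or.inr ⟨h1, h2.tail hbc⟩
    · rcases ih with h1 | ⟨h1, h2⟩
      · exact Or.inr ⟨h1.to_reflTransGen, Relation.ReflTransGen.refl⟩
      · exact Or.inr ⟨h1, Relation.ReflTransGen.refl⟩

/-- Existence of a path with `n` edges ending at `v`. -/
def pend (E : ℕ → ℕ → Prop) (v n : ℕ) : Prop :=
  ∃ l : List ℕ, l.Chain' E ∧ l.getLast? = some v ∧ l.length = n + 1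

lemma pend_zero (E : ℕ → ℕ → Prop) (v : ℕ) : pend E v 0 :=
  ⟨[v], List.isChain_singleton v, rfl, rfl⟩

lemma pend_succ {E : ℕ → ℕ → Prop} {u v n : ℕ} (h : pend E u n) (huv : E u v) :
    pend E v (n + 1) := by
  obtain ⟨l, hch, hlast, hlen⟩ := h
  refine ⟨l ++ [v], ?_, ?_, by simp [hlen]⟩
  · rw [List.Chain', List.isChain_append]
    refine ⟨hch, List.isChain_singleton v, ?_⟩
    intro x hx y hy
    rw [hlast] at hx
    simp only [Option.mem_def, Option.some_inj] at hx
    simp only [List.head?_cons, Option.mem_def, Option.some_inj] at hy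
    subst hx; subst hy; exact huv
  · simp

/-- The longest path ending at `v`. -/
noncomputable def phi (E : ℕ → ℕ → Prop) (v : ℕ) : ℕ := sSup {n | pend E v n}

section Phi

variable {E : ℕ → ℕ → Prop} {R : ℕ} (hbd : ∀ w n, pend E w n → n < R)

include hbd

lemma phi_mem (v : ℕ) : pend E v (phi E v) := by
  have h1 : {n | pend E v n}.Nonempty := ⟨0, pend_zero E v⟩
  have h2 : BddAbove {n | pend E v n} := ⟨R, fun n hn => le_of_lt (hbd v n hn)⟩
  exact Nat.sSup_mem h1 h2

lemma phi_lt (v : ℕ) : phi E v < R := hbd v _ (phi_mem hbd v)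

lemma phi_succ_le {u v : ℕ} (huv : E u v) : phi E u + 1 ≤ phi E v :=
  le_csSup ⟨R, fun n hn => le_of_lt (hbd v n (by exact hn))⟩
    (by exact pend_succ (phi_mem hbd u) huv)

lemma phi_lt_of_transGen {u v : ℕ} (h : Relation.TransGen E u v) :
    phi E u < phi E v := by
  induction h with
  | single hab => exact phi_succ_le hbd hab
  | tail _ hbc ih => exact lt_trans ih (phi_succ_le hbd hbc)

end Phi

lemma chain'_mem_prop {P : ℕ → Prop} {E : ℕ → ℕ → Prop} (hE : ∀ a b, E a b → P a ∧ P b) :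
    ∀ l : List ℕ, l.Chain' E → 2 ≤ l.length → ∀ v ∈ l, P v
  | [], _, hlen => by simp at hlen
  | [_], _, hlen => by simp at hlen
  | a :: b :: rest, hch, _ => by
    rw [List.Chain', List.isChain_cons_cons] at hch
    intro v hv
    rcases List.mem_cons.1 hv with rfl | hv
    · exact (hE _ _ hch.1).1
    · cases rest with
      | nil =>
        simp only [List.mem_singleton] at hv
        subst hv
        exact (hE _ _ hch.1).2
      | cons d rest' =>
        exact chain'_mem_prop hE (b :: d :: rest') hch.2 (by simp) v hv

end Aux

/-! ### Density lemmas -/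

section Dens

open scoped Classical in
noncomputable def dseq (A : Set ℕ) (n : ℕ) : ℝ :=
  (((Finset.Icc 1 n).filter (fun m => m ∈ A)).card : ℝ) / n

open scoped Classical in
lemma upDens_eq (A : Set ℕ) : upDens A = limsup (dseq A) atTop := rfl

open scoped Classical in
lemma dseq_nonneg (A : Set ℕ) (n : ℕ) : 0 ≤ dseq A n := by
  unfold dseq; positivity

open scoped Classical in
lemma dseq_le_one (A : Set ℕ) (n : ℕ) : dseq A n ≤ 1 := by
  unfold dseq
  rcases Nat.eq_zero_or_pos n with rfl | hn
  · simp
  · rw [div_le_one (by exact_mod_cast hn)]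
    have : ((Finset.Icc 1 n).filter (fun m => m ∈ A)).card ≤ (Finset.Icc 1 n).card :=
      Finset.card_filter_le _ _
    have hcard : (Finset.Icc 1 n).card = n := by simp
    exact_mod_cast this.trans_eq hcard

lemma dseq_bddLe (A : Set ℕ) : IsBoundedUnder (· ≤ ·) atTop (dseq A) :=
  isBoundedUnder_of ⟨1, fun n => dseq_le_one A n⟩

lemma dseq_bddGe (A : Set ℕ) : IsBoundedUnder (· ≥ ·) atTop (dseq A) :=
  isBoundedUnder_of ⟨0, fun n => dseq_nonneg A n⟩

lemma dseq_cobddLe (A : Set ℕ) : IsCoboundedUnder (· ≤ ·) atTop (dseq A) :=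
  (dseq_bddGe A).isCoboundedUnder_le

lemma upDens_nonneg (A : Set ℕ) : 0 ≤ upDens A := by
  rw [upDens_eq]
  have := le_limsup_of_frequently_le
    (Frequently.of_forall (fun n => dseq_nonneg A n)) (dseq_bddLe A)
  exact this

lemma limsup_sum_le (r : ℕ) (g : ℕ → ℕ → ℝ) (h0 : ∀ i n, 0 ≤ g i n)
    (h1 : ∀ i n, g i n ≤ 1) :
    limsup (fun n => ∑ i ∈ Finset.range r, g i n) atTop ≤
      ∑ i ∈ Finset.range r, limsup (fun n => g i n) atTop := by
  induction r with
  | zero => simp [limsup_const]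
  | succ r ih =>
    have hrw : (fun n => ∑ i ∈ Finset.range (r + 1), g i n) =
        (fun n => ∑ i ∈ Finset.range r, g i n) + (fun n => g r n) := by
      funext n; simp [Finset.sum_range_succ]
    rw [hrw, Finset.sum_range_succ]
    have hb1 : IsBoundedUnder (· ≥ ·) atTop (fun n => ∑ i ∈ Finset.range r, g i n) :=
      isBoundedUnder_of ⟨0, fun n => Finset.sum_nonneg fun i _ => h0 i n⟩
    have hb2 : IsBoundedUnder (· ≤ ·) atTop (fun n => ∑ i ∈ Finset.range r, g i n) :=
      isBoundedUnder_of ⟨(r : ℝ), fun n => by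
        calc ∑ i ∈ Finset.range r, g i n ≤ ∑ i ∈ Finset.range r, 1 :=
              Finset.sum_le_sum fun i _ => h1 i n
          _ = (r : ℝ) := by simp⟩
    have hb3 : IsCoboundedUnder (· ≤ ·) atTop (fun n => g r n) :=
      (isBoundedUnder_of ⟨0, fun n => h0 r n⟩ :
        IsBoundedUnder (· ≥ ·) atTop (fun n => g r n)).isCoboundedUnder_le
    have hb4 : IsBoundedUnder (· ≤ ·) atTop (fun n => g r n) :=
      isBoundedUnder_of ⟨1, fun n => h1 r n⟩
    exact (limsup_add_le hb1 hb2 hb3 hb4).trans (add_le_add ih le_rfl)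

open scoped Classical in
lemma upDens_le_sum (S : Set ℕ) (T : ℕ → Set ℕ) (r : ℕ)
    (hcov : ∀ x ∈ S, ∃ i < r, x ∈ T i) :
    upDens S ≤ ∑ i ∈ Finset.range r, upDens (T i) := by
  have hpt : ∀ n, dseq S n ≤ ∑ i ∈ Finset.range r, dseq (T i) n := by
    intro n
    have hcard : (((Finset.Icc 1 n).filter (fun m => m ∈ S)).card : ℝ) ≤
        ∑ i ∈ Finset.range r, (((Finset.Icc 1 n).filter (fun m => m ∈ T i)).card : ℝ) := by
      have hsub : (Finset.Icc 1 n).filter (fun m => m ∈ S) ⊆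
          (Finset.range r).biUnion (fun i => (Finset.Icc 1 n).filter (fun m => m ∈ T i)) := by
        intro m hm
        rw [Finset.mem_filter] at hm
        obtain ⟨i, hi, hmi⟩ := hcov m hm.2
        exact Finset.mem_biUnion.2 ⟨i, Finset.mem_range.2 hi,
          Finset.mem_filter.2 ⟨hm.1, hmi⟩⟩
      have := (Finset.card_le_card hsub).trans (Finset.card_biUnion_le)
      exact_mod_cast this
    unfold dseq
    rw [← Finset.sum_div]
    rcases Nat.eq_zero_or_pos n with rfl | hn
    · simp
    · have hnpos : (0 : ℝ) < (n : ℝ) := by exact_mod_cast hn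
      exact div_le_div_of_nonneg_right hcard hnpos.le
  calc upDens S ≤ limsup (fun n => ∑ i ∈ Finset.range r, dseq (T i) n) atTop := by
        rw [upDens_eq]
        exact limsup_le_limsup (Eventually.of_forall hpt) (dseq_cobddLe S)
          (isBoundedUnder_of ⟨(r : ℝ), fun n => by
            calc ∑ i ∈ Finset.range r, dseq (T i) n ≤ ∑ i ∈ Finset.range r, 1 :=
                  Finset.sum_le_sum fun i _ => dseq_le_one _ n
              _ = (r : ℝ) := by simp⟩)
    _ ≤ ∑ i ∈ Finset.range r, upDens (T i) := by
        simpa [upDens_eq] using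
          limsup_sum_le r (fun i n => dseq (T i) n)
            (fun i n => dseq_nonneg _ n) (fun i n => dseq_le_one _ n)

open scoped Classical in
lemma dseq_eq_one {A : Set ℕ} {n : ℕ} (hn : 1 ≤ n)
    (hA : ∀ m, 1 ≤ m → m ≤ n → m ∈ A) : dseq A n = 1 := by
  unfold dseq
  rw [Finset.filter_true_of_mem (fun m hm => by
    have h1 := Finset.mem_Icc.1 hm
    exact hA m h1.1 h1.2)]
  have hn0 : (n : ℝ) ≠ 0 := Nat.cast_ne_zero.2 (by omega)
  rw [Nat.card_Icc]
  simp only [Nat.add_sub_cancel]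
  rw [div_self hn0]

open scoped Classical in
lemma upDens_pos_set : upDens {n : ℕ | 0 < n} = 1 := by
  rw [upDens_eq]
  have hev : ∀ᶠ n in atTop, dseq {n : ℕ | 0 < n} n = 1 := by
    filter_upwards [eventually_ge_atTop 1] with n hn
    exact dseq_eq_one hn (fun m hm _ => hm)
  rw [limsup_congr hev]
  exact limsup_const 1

open scoped Classical in
lemma upDens_finite_lt {B : Set ℕ} (hfin : B.Finite) {p : ℝ} (hp : 0 < p) :
    upDens B < p := by
  rw [upDens_eq]
  have hle : ∀ n : ℕ, dseq B n ≤ (hfin.toFinset.card : ℝ) / n := by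
    intro n
    unfold dseq
    rcases Nat.eq_zero_or_pos n with rfl | hn
    · simp
    · have hnpos : (0 : ℝ) < (n : ℝ) := by exact_mod_cast hn
      have hsub : (Finset.Icc 1 n).filter (fun m => m ∈ B) ⊆ hfin.toFinset := by
        intro m hm
        rw [Finset.mem_filter] at hm
        exact hfin.mem_toFinset.2 hm.2
      have hcard : ((((Finset.Icc 1 n).filter (fun m => m ∈ B)).card : ℝ)) ≤
          (hfin.toFinset.card : ℝ) := by exact_mod_cast Finset.card_le_card hsub
      exact div_le_div_of_nonneg_right hcard hnpos.le
  have htend : Tendsto (fun n : ℕ => (hfin.toFinset.card : ℝ) / n) atTop (nhds 0) :=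
    tendsto_const_div_atTop_nhds_zero_nat _
  have hev : ∀ᶠ n in atTop, dseq B n ≤ p / 2 := by
    filter_upwards [htend.eventually_lt_const (by positivity : (0:ℝ) < p / 2)] with n hn
    exact (hle n).trans hn.le
  calc limsup (dseq B) atTop ≤ p / 2 := limsup_le_of_le (dseq_cobddLe B) hev
    _ < p := by linarith

end Dens

/-! ### The main step lemma -/

open scoped Classical in
lemma step_lemma (c : ℕ → ℕ → ℕ) (t R : ℕ) (hR : 1 ≤ R)
    (h : ¬ ∃ l : List ℕ, FinPathN c t l ∧ l.length = R + 1)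
    (S : Set ℕ) (hS : ∀ v ∈ S, 0 < v) :
    ∃ T, T ⊆ S ∧ (∀ u ∈ T, ∀ v ∈ T, u ≠ v → c u v ≠ t) ∧
      upDens S ≤ (R : ℝ) * upDens T := by
  set D : Set (ℕ × ℕ) :=
    {p | p.1 ∈ S ∧ p.2 ∈ S ∧ p.1 ≠ p.2 ∧ c p.1 p.2 = t} with hD
  obtain ⟨E, hED, hacy, hmax⟩ := exists_max_acyclic D
  set Erel : ℕ → ℕ → Prop := fun a b => (a, b) ∈ E with hErel
  -- bound on path lengths
  have hbd : ∀ w n, pend Erel w n → n < R := by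
    intro w n hpend
    by_contra hge
    push_neg at hge
    obtain ⟨l, hch, _, hlen⟩ := hpend
    set l' := l.drop (l.length - (R + 1)) with hl'
    have hlen' : l'.length = R + 1 := by
      rw [hl', List.length_drop]; omega
    have hch' : l'.Chain' Erel := hch.suffix (List.drop_suffix _ _)
    have hnodup : l'.Nodup := nodup_of_chain' hacy hch'
    have hpos : ∀ v ∈ l', 0 < v := by
      refine chain'_mem_prop (P := fun v => 0 < v) ?_ l' hch' (by omega)
      intro a b hab
      have := hED hab
      exact ⟨hS a this.1, hS b this.2.1⟩
    have hcol : l'.Chain' (fun a b => c a b = t) :=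
      hch'.imp fun a b hab => (hED hab).2.2.2
    exact h ⟨l', ⟨hnodup, hpos, hcol⟩, hlen'⟩
  -- distinct `D`-adjacent vertices have distinct levels
  have hkey : ∀ u v, (u, v) ∈ D → phi Erel u ≠ phi Erel v := by
    intro u v huv
    by_cases hE : (u, v) ∈ E
    · exact Nat.ne_of_lt (phi_lt_of_transGen hbd (Relation.TransGen.single hE))
    · have hnac := hmax (u, v) huv hE
      rw [Acyc] at hnac
      push_neg at hnac
      obtain ⟨w, hw⟩ := hnac
      have hw' : Relation.TransGen (fun x y => Erel x y ∨ (x = u ∧ y = v)) w w := by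
        refine Relation.TransGen.mono (fun a b hab => ?_) _ _ hw
        rcases Set.mem_insert_iff.1 hab with heq | hmem
        · exact Or.inr ⟨congrArg Prod.fst heq, congrArg Prod.snd heq⟩
        · exact Or.inl hmem
      rcases transGen_insert hw' with hcyc | ⟨h1, h2⟩
      · exact absurd hcyc (hacy w)
      · have hvu : Relation.ReflTransGen Erel v u := h2.trans h1
        rcases (Relation.reflTransGen_iff_eq_or_transGen.1 hvu) with heq | htr
        · exact (huv.2.2.1 heq).elim
        · exact (Nat.ne_of_lt (phi_lt_of_transGen hbd htr)).symm
  -- the classes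
  set T : ℕ → Set ℕ := fun i => {x ∈ S | phi Erel x = i} with hT
  have hcov : ∀ x ∈ S, ∃ i < R, x ∈ T i := fun x hx =>
    ⟨phi Erel x, phi_lt hbd x, hx, rfl⟩
  obtain ⟨i, _, hmaxi⟩ := Finset.exists_max_image (Finset.range R)
    (fun i => upDens (T i)) ⟨0, Finset.mem_range.2 (by omega)⟩
  refine ⟨T i, fun x hx => hx.1, ?_, ?_⟩
  · intro u hu v hv huv hc
    exact hkey u v ⟨hu.1, hv.1, huv, hc⟩ (hu.2.trans hv.2.symm)
  · calc upDens S ≤ ∑ j ∈ Finset.range R, upDens (T j) := upDens_le_sum S T R hcov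
      _ ≤ ∑ _j ∈ Finset.range R, upDens (T i) :=
          Finset.sum_le_sum fun j hj => hmaxi j hj
      _ = (R : ℝ) * upDens (T i) := by
          rw [Finset.sum_const, Finset.card_range, nsmul_eq_mul]

/-! ### The recursion -/

lemma build (c : ℕ → ℕ → ℕ) (k : ℕ) (r : ℕ → ℕ) (hr : ∀ t < k, 1 ≤ r t)
    (h : ∀ t < k, ¬ ∃ l : List ℕ, FinPathN c t l ∧ l.length = r t + 1) :
    ∀ j ≤ k, ∃ B : Set ℕ, (∀ v ∈ B, 0 < v) ∧
      (∀ t < j, ∀ u ∈ B, ∀ v ∈ B, u ≠ v → c u v ≠ t) ∧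
      (∏ t ∈ Finset.range j, (1 / (r t : ℝ))) ≤ upDens B := by
  intro j
  induction j with
  | zero =>
    intro _
    exact ⟨{n : ℕ | 0 < n}, fun v hv => hv, fun t ht => by omega,
      by simp [upDens_pos_set]⟩
  | succ j ih =>
    intro hjk
    obtain ⟨B, hBpos, hBedge, hBdens⟩ := ih (by omega)
    obtain ⟨T, hTB, hTedge, hTdens⟩ :=
      step_lemma c j (r j) (hr j (by omega)) (h j (by omega)) B hBpos
    refine ⟨T, fun v hv => hBpos v (hTB hv), ?_, ?_⟩
    · intro t ht u hu v hv huv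
      rcases Nat.lt_or_ge t j with ht' | ht'
      · exact hBedge t ht' u (hTB hu) v (hTB hv) huv
      · have : t = j := by omega
        subst this
        exact hTedge u hu v hv huv
    · have hrj : (0 : ℝ) < (r j : ℝ) := by
        exact_mod_cast hr j (by omega)
      rw [Finset.prod_range_succ]
      have h1 : (∏ t ∈ Finset.range j, (1 / (r t : ℝ))) * (1 / (r j : ℝ)) ≤
          upDens B * (1 / (r j : ℝ)) := by
        apply mul_le_mul_of_nonneg_right hBdens
        positivity
      refine h1.trans ?_
      rw [mul_one_div, div_le_iff₀ hrj]
      linarith [hTdens]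

/-! ### Main theorem -/

/-- If a `(k+1)`-colouring (colours `0,...,k`) of the complete symmetric digraph on
ℕ⁺ has, for each `t < k`, no `t`-coloured directed path with `r t` edges, then there
is a directed path of colour `k` with upper density at least `∏_{t<k} 1/(r t)`. -/
theorem stmt13 (k : ℕ) (hk : 2 ≤ k) (c : ℕ → ℕ → ℕ) (hc : ∀ m n, c m n ≤ k)
    (r : ℕ → ℕ)
    (h : ∀ t < k, ¬ ∃ l : List ℕ, FinPathN c t l ∧ l.length = r t + 1) :
    ∃ f : ℕ → ℕ, InfPathN c k f ∧
      (∏ t ∈ Finset.range k, (1 / (r t : ℝ))) ≤ upDens (Set.range f) := by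
  have hr : ∀ t < k, 1 ≤ r t := by
    intro t ht
    by_contra hlt
    push_neg at hlt
    have hrt : r t = 0 := by omega
    exact h t ht ⟨[1], ⟨List.nodup_singleton 1, by simp, List.isChain_singleton 1⟩,
      by simp [hrt]⟩
  obtain ⟨B, hBpos, hBedge, hBdens⟩ := build c k r hr h k le_rfl
  set p : ℝ := ∏ t ∈ Finset.range k, (1 / (r t : ℝ)) with hp
  have hppos : 0 < p := by
    apply Finset.prod_pos
    intro t ht
    have := hr t (Finset.mem_range.1 ht)
    have : (0 : ℝ) < (r t : ℝ) := by exact_mod_cast this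
    positivity
  -- B is infinite
  have hBinf : {n : ℕ | n ∈ B}.Infinite := by
    rw [Set.setOf_mem_eq]
    intro hfin
    exact absurd hBdens (not_le.2 (upDens_finite_lt hfin hppos))
  set f : ℕ → ℕ := Nat.nth (fun n => n ∈ B) with hf
  have hinj : Function.Injective f := Nat.nth_injective hBinf
  have hmem : ∀ j, f j ∈ B := fun j => Nat.nth_mem_of_infinite hBinf j
  have hrange : Set.range f = B := by
    rw [hf, Nat.range_nth_of_infinite hBinf, Set.setOf_mem_eq]
  refine ⟨f, ⟨hinj, fun j => hBpos _ (hmem j), ?_⟩, ?_⟩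
  · intro j
    have hne : f j ≠ f (j + 1) := fun heq => by
      have := hinj heq; omega
    have hle : c (f j) (f (j + 1)) ≤ k := hc _ _
    by_contra hck
    have hlt : c (f j) (f (j + 1)) < k := lt_of_le_of_ne hle hck
    exact hBedge _ hlt _ (hmem j) _ (hmem (j + 1)) hne rfl
  · rw [hrange]
    exact hBdens
end

section
/- Fix a 2-colouring of the complete symmetric digraph on ℕ⁺ with no red directed path of length r. Then there exist at most r vertex-disjoint blue directed paths that together cover all but finitely many vertices of ℕ⁺. -/
open Filter

lemma pathFrom_zero (c : ℕ → ℕ → Bool) (col : Bool) {v : ℕ} (hv : 0 < v) :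
    PathFrom c col v 0 := by
  refine ⟨[v], ⟨List.nodup_singleton v, ?_, List.isChain_singleton v⟩, rfl, rfl⟩
  simpa using hv

lemma pathFrom_mono (c : ℕ → ℕ → Bool) (col : Bool) {v j k : ℕ} (hjk : j ≤ k)
    (h : PathFrom c col v k) : PathFrom c col v j := by
  obtain ⟨l, ⟨hnd, hpos, hch⟩, hhead, hlen⟩ := h
  refine ⟨l.take (j + 1), ⟨hnd.sublist (List.take_sublist _ _),
    fun x hx => hpos x (List.mem_of_mem_take hx),
    hch.prefix (List.take_prefix _ _)⟩, ?_, ?_⟩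
  · obtain ⟨tl, rfl⟩ : ∃ tl, l = v :: tl := by
      cases l with
      | nil => simp at hhead
      | cons a tl =>
        simp only [List.head?_cons, Option.some.injEq] at hhead
        exact ⟨tl, by rw [hhead]⟩
    simp [List.take_succ_cons]
  · rw [List.length_take, hlen]
    omega

lemma level_unique (c : ℕ → ℕ → Bool) {v i j : ℕ} (hi : Level c v i) (hj : Level c v j) :
    i = j := by
  by_contra hne
  rcases Nat.lt_or_ge i j with hlt | hge
  · exact hi.2 (pathFrom_mono c red hlt hj.1)
  · exact hj.2 (pathFrom_mono c red (by omega : j + 1 ≤ i) hi.1)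


open scoped Classical

lemma level_exists {r : ℕ} (hr : 1 ≤ r) (c : ℕ → ℕ → Bool) (h : NoPathOfLength c red r)
    {v : ℕ} (hv : 0 < v) : ∃ i < r, Level c v i := by
  have hnr : ∀ k, r ≤ k → ¬ PathFrom c red v k := by
    intro k hk hp
    obtain ⟨l, hl, _, hlen⟩ := pathFrom_mono c red hk hp
    exact h ⟨l, hl, hlen⟩
  set i := Nat.findGreatest (PathFrom c red v) r with hi
  have hPi : PathFrom c red v i :=
    Nat.findGreatest_spec (Nat.zero_le r) (pathFrom_zero c red hv)
  have hir : i < r := by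
    rcases Nat.lt_or_ge i r with h' | h'
    · exact h'
    · exact absurd hPi (hnr i h')
  refine ⟨i, hir, hPi, fun hp => ?_⟩
  rcases Nat.lt_or_ge r (i + 1) with h' | h'
  · exact hnr (i + 1) (by omega) hp
  · exact Nat.findGreatest_is_greatest (by omega) h' hp

/-- Key lemma: a same-level red in-neighbour must lie on any witnessing longest path. -/
lemma mem_of_red_in (c : ℕ → ℕ → Bool) {u v i : ℕ} (hu : 0 < u)
    (hLu : Level c u i) (huv : c u v = red) {l : List ℕ}
    (hl : FinPath c red l) (hhead : l.head? = some v) (hlen : l.length = i + 1) :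
    u ∈ l := by
  by_contra hul
  apply hLu.2
  refine ⟨u :: l, ⟨?_, ?_, ?_⟩, rfl, by simp [hlen]⟩
  · exact List.nodup_cons.2 ⟨hul, hl.1⟩
  · intro x hx
    rcases List.mem_cons.1 hx with rfl | hx'
    · exact hu
    · exact hl.2.1 x hx'
  · refine List.isChain_cons.2 ⟨?_, hl.2.2⟩
    intro y hy
    rw [hhead] at hy
    simp only [Option.mem_def, Option.some.injEq] at hy
    subst hy
    exact huv

/-- The set of same-level red in-neighbours of `v` is finite. -/
lemma red_in_finite (c : ℕ → ℕ → Bool) {v i : ℕ} (hLv : Level c v i) :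
    {u : ℕ | 0 < u ∧ Level c u i ∧ c u v = red}.Finite := by
  obtain ⟨l, hl, hhead, hlen⟩ := hLv.1
  apply Set.Finite.subset l.finite_toSet
  intro u ⟨hu, hLu, huv⟩
  exact mem_of_red_in c hu hLu huv hl hhead hlen

lemma S_finite (c : ℕ → ℕ → Bool) (i : ℕ) :
    {u : ℕ | (0 < u ∧ Level c u i) ∧
      {b : ℕ | (0 < b ∧ Level c b i) ∧ c u b = blue}.Finite}.Finite := by
  classical
  set A : Set ℕ := {v | 0 < v ∧ Level c v i} with hA
  by_cases hAf : A.Finite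
  · exact hAf.subset (fun u hu => hu.1)
  have hAinf : A.Infinite := hAf
  by_contra hS
  have hSinf : {u : ℕ | (0 < u ∧ Level c u i) ∧
      {b : ℕ | (0 < b ∧ Level c b i) ∧ c u b = blue}.Finite}.Infinite := hS
  obtain ⟨F, hFsub, hFcard⟩ := hSinf.exists_subset_card_eq (i + 1)
  have hUfin : (↑F ∪ ⋃ u ∈ F, {b : ℕ | (0 < b ∧ Level c b i) ∧ c u b = blue}).Finite := by
    refine (F.finite_toSet.union (Set.Finite.biUnion F.finite_toSet ?_))
    intro u hu
    exact (hFsub hu).2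
  obtain ⟨y, hyA, hyU⟩ := (hAinf.diff hUfin).nonempty
  obtain ⟨l, hl, hhead, hlen⟩ := hyA.2.1
  have hyl : y ∈ l := by
    cases l with
    | nil => simp at hhead
    | cons a tl =>
      simp only [List.head?_cons, Option.some.injEq] at hhead
      exact hhead ▸ (List.mem_cons_self : a ∈ a :: tl)
  have hFl : ∀ u ∈ F, u ∈ l := by
    intro u hu
    have huS := hFsub hu
    have hredy : c u y = red := by
      have : ¬ ((0 < y ∧ Level c y i) ∧ c u y = blue) := by
        intro hmem
        exact hyU (Set.mem_union_right _ (Set.mem_biUnion hu hmem))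
      have hb : c u y ≠ blue := fun hb => this ⟨hyA, hb⟩
      revert hb; unfold red blue; cases c u y <;> simp
    exact mem_of_red_in c huS.1.1 huS.1.2 hredy hl hhead hlen
  have hyF : y ∉ F := fun hyF => hyU (Set.mem_union_left _ hyF)
  have hsub : insert y F ⊆ l.toFinset := by
    intro x hx
    rcases Finset.mem_insert.1 hx with rfl | hx
    · exact List.mem_toFinset.2 hyl
    · exact List.mem_toFinset.2 (hFl x hx)
  have hcard := Finset.card_le_card hsub
  rw [Finset.card_insert_of_notMem hyF, hFcard, List.toFinset_card_of_nodup hl.1, hlen] at hcard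
  omega

lemma greedy (c : ℕ → ℕ → Bool) (T : Set ℕ) (hT : T.Infinite)
    (hpos : ∀ a ∈ T, 0 < a)
    (hout : ∀ a ∈ T, {b : ℕ | b ∈ T ∧ c a b = blue}.Infinite)
    (hin : ∀ a ∈ T, {b : ℕ | b ∈ T ∧ c b a = red}.Finite) :
    ∃ f : ℕ → ℕ, InfPath c blue f ∧ Set.range f = T := by
  classical
  set Inv : List ℕ → Prop := fun l => l ≠ [] ∧ (∀ x ∈ l, x ∈ T) ∧ l.Nodup ∧
    l.Chain' (fun a b => c a b = blue) with hInvdef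
  set tgt : List ℕ → ℕ := fun l => sInf (T \ {x | x ∈ l}) with htgtdef
  have htgt_spec : ∀ l : List ℕ, tgt l ∈ T ∧ tgt l ∉ l := by
    intro l
    have hne : (T \ {x | x ∈ l}).Nonempty := (hT.diff l.finite_toSet).nonempty
    have := Nat.sInf_mem hne
    exact ⟨this.1, this.2⟩
  have key : ∀ l, Inv l → ∃ l', Inv l' ∧ l <+: l' ∧ tgt l ∈ l' ∧
      l'.length = l.length + 2 := by
    intro l hl
    obtain ⟨hne, hmem, hnd, hch⟩ := hl
    obtain ⟨haT, hal⟩ := htgt_spec l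
    set a := tgt l with ha
    set e := l.getLast hne with he
    have heT : e ∈ T := hmem e (List.getLast_mem hne)
    have hX : ({b : ℕ | b ∈ T ∧ c e b = blue} \
        ({b : ℕ | b ∈ T ∧ c b a = red} ∪ {x | x ∈ l} ∪ {a})).Infinite :=
      (hout e heT).diff (((hin a haT).union l.finite_toSet).union (Set.finite_singleton a))
    obtain ⟨x, ⟨hxT, hex⟩, hxno⟩ := hX.nonempty
    have hxl : x ∉ l := fun hmm => hxno (Or.inl (Or.inr hmm))
    have hxa : x ≠ a := fun hmm => hxno (Or.inr hmm)
    have hxablue : c x a = blue := by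
      have h1 : ¬ (x ∈ T ∧ c x a = red) := fun hmm => hxno (Or.inl (Or.inl hmm))
      have hb : c x a ≠ red := fun hb => h1 ⟨hxT, hb⟩
      revert hb; unfold red blue; cases c x a <;> simp
    refine ⟨l ++ [x, a], ⟨by simp, ?_, ?_, ?_⟩, ⟨[x, a], rfl⟩, by simp, by simp⟩
    · intro y hy
      rcases List.mem_append.1 hy with hy | hy
      · exact hmem y hy
      · simp only [List.mem_cons, List.mem_singleton, List.not_mem_nil, or_false] at hy
        rcases hy with rfl | rfl
        · exact hxT
        · exact haT
    · rw [List.nodup_append]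
      refine ⟨hnd, by simp [hxa], ?_⟩
      intro y hyl z hy2 hyz; subst hyz
      simp only [List.mem_cons, List.mem_singleton, List.not_mem_nil, or_false] at hy2
      rcases hy2 with rfl | rfl
      · exact hxl hyl
      · exact hal hyl
    · unfold List.Chain'; rw [List.isChain_append]
      refine ⟨hch, by simp [List.isChain_cons_cons, hxablue], ?_⟩
      intro p hp q hq
      have hpe : p = e := by
        rw [List.getLast?_eq_getLast hne] at hp
        exact (by simpa using hp : e = p).symm
      have hqx : q = x := (by simpa using hq : x = q).symm
      rw [hpe, hqx]; exact hex
  choose! step hs1 hs2 hs3 hs4 using key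
  obtain ⟨t0, ht0⟩ := hT.nonempty
  set L : ℕ → List ℕ := fun n => step^[n] [t0] with hL
  have hInv0 : Inv [t0] := ⟨by simp, by simpa using ht0, List.nodup_singleton t0,
    List.isChain_singleton t0⟩
  have hstepL : ∀ n, L (n + 1) = step (L n) := fun n =>
    Function.iterate_succ_apply' step n [t0]
  have hInvL : ∀ n, Inv (L n) := by
    intro n
    induction n with
    | zero => exact hInv0
    | succ n ih =>
      rw [hstepL]
      exact hs1 _ ih
  have hpre : ∀ n, L n <+: L (n + 1) := fun n => (hstepL n) ▸ hs2 _ (hInvL n)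
  have hpre' : ∀ m n, m ≤ n → L m <+: L n := by
    intro m n hmn
    induction n with
    | zero => rw [Nat.le_zero.1 hmn]
    | succ n ih =>
      rcases Nat.lt_or_ge m (n + 1) with h' | h'
      · exact (ih (by omega)).trans (hpre n)
      · have : m = n + 1 := by omega
        rw [this]
  have hlenL : ∀ n, (L n).length = 2 * n + 1 := by
    intro n
    induction n with
    | zero => simp [hL]
    | succ n ih => rw [hstepL n, hs4 _ (hInvL n), ih]; ring
  -- coverage
  have hcover : ∀ t ∈ T, ∃ n, t ∈ L n := by
    intro t htT
    have claim : ∀ k n, ((Finset.range (t + 1)).filter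
        (fun s => s ∈ T ∧ s ∉ L n)).card ≤ k → ∃ m, t ∈ L m := by
      intro k
      induction k with
      | zero =>
        intro n hn
        by_contra hcon
        push_neg at hcon
        have : t ∈ (Finset.range (t + 1)).filter (fun s => s ∈ T ∧ s ∉ L n) := by
          simp only [Finset.mem_filter, Finset.mem_range]
          exact ⟨by omega, htT, hcon n⟩
        have := Finset.card_pos.2 ⟨t, this⟩
        omega
      | succ k ih =>
        intro n hn
        by_cases htn : t ∈ L n
        · exact ⟨n, htn⟩
        have haT := (htgt_spec (L n)).1
        have hal := (htgt_spec (L n)).2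
        have hamem : tgt (L n) ∈ L (n + 1) := (hstepL n) ▸ hs3 _ (hInvL n)
        have hale : tgt (L n) ≤ t := Nat.sInf_le ⟨htT, htn⟩
        apply ih (n + 1)
        have hsub : (Finset.range (t + 1)).filter (fun s => s ∈ T ∧ s ∉ L (n + 1)) ⊆
            ((Finset.range (t + 1)).filter (fun s => s ∈ T ∧ s ∉ L n)).erase (tgt (L n)) := by
          intro s hs
          simp only [Finset.mem_filter, Finset.mem_range] at hs
          obtain ⟨hst, hsT, hsL⟩ := hs
          refine Finset.mem_erase.2 ⟨?_, ?_⟩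
          · rintro rfl; exact hsL hamem
          · simp only [Finset.mem_filter, Finset.mem_range]
            exact ⟨hst, hsT, fun hsn => hsL ((hpre n).mem hsn)⟩
        have hamem' : tgt (L n) ∈ (Finset.range (t + 1)).filter
            (fun s => s ∈ T ∧ s ∉ L n) := by
          simp only [Finset.mem_filter, Finset.mem_range]
          exact ⟨by omega, haT, hal⟩
        have := Finset.card_le_card hsub
        rw [Finset.card_erase_of_mem hamem'] at this
        omega
    exact claim _ 0 le_rfl
  -- the path
  set f : ℕ → ℕ := fun j => (L (j + 1)).getD j 0 with hf
  have hjlen : ∀ j, j < (L (j + 1)).length := by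
    intro j; rw [hlenL]; omega
  have hf_eq : ∀ n j (hj : j < (L n).length), f j = (L n)[j] := by
    intro n j hj
    rw [hf]
    simp only
    rw [List.getD_eq_getElem _ _ (hjlen j)]
    rcases le_total (j + 1) n with h' | h'
    · exact (hpre' _ _ h').getElem (hjlen j)
    · exact ((hpre' _ _ h').getElem hj).symm
  have hmemT : ∀ j, f j ∈ T := by
    intro j
    rw [hf_eq (j + 1) j (hjlen j)]
    exact (hInvL (j + 1)).2.1 _ (List.getElem_mem _)
  have hinj : Function.Injective f := by
    have haux : ∀ j k, j < k → f j ≠ f k := by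
      intro j k hjk heq
      have hk : k < (L (k + 1)).length := hjlen k
      have hj : j < (L (k + 1)).length := by rw [hlenL]; omega
      rw [hf_eq (k + 1) j hj, hf_eq (k + 1) k hk] at heq
      have := ((hInvL (k + 1)).2.2.1.getElem_inj_iff).1 heq
      omega
    intro j k heq
    rcases lt_trichotomy j k with h' | h' | h'
    · exact absurd heq (haux j k h')
    · exact h'
    · exact absurd heq.symm (haux k j h')
  refine ⟨f, ⟨hinj, fun j => hpos _ (hmemT j), ?_⟩, ?_⟩
  · intro j
    have h1 : j < (L (j + 2)).length := by rw [hlenL]; omega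
    have h2 : j + 1 < (L (j + 2)).length := by rw [hlenL]; omega
    rw [hf_eq (j + 2) j h1, hf_eq (j + 2) (j + 1) h2]
    have hch := (hInvL (j + 2)).2.2.2
    unfold List.Chain' at hch; rw [List.isChain_iff_getElem] at hch
    exact hch j (by rw [hlenL]; omega)
  · apply Set.eq_of_subset_of_subset
    · rintro _ ⟨j, rfl⟩; exact hmemT j
    · intro t htT
      obtain ⟨n, htn⟩ := hcover t htT
      obtain ⟨p, hp, hpt⟩ := List.mem_iff_getElem.1 htn
      exact ⟨p, by rw [hf_eq n p hp, hpt]⟩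

/-- If there is no red directed path of length `r`, then at most `r` vertex-disjoint
blue directed paths cover all but finitely many positive integers. -/
theorem stmt16 (r : ℕ) (hr : 1 ≤ r) (c : ℕ → ℕ → Bool) (h : NoPathOfLength c red r) :
    ∃ (m : ℕ) (F : Fin m → ℕ → ℕ), m ≤ r ∧
      (∀ a, InfPath c blue (F a)) ∧
      (∀ a b, a ≠ b → Disjoint (Set.range (F a)) (Set.range (F b))) ∧
      {n : ℕ | 0 < n ∧ ∀ a, n ∉ Set.range (F a)}.Finite := by
  classical
  set A : ℕ → Set ℕ := fun i => {v | 0 < v ∧ Level c v i} with hA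
  set S : ℕ → Set ℕ := fun i => {u | (0 < u ∧ Level c u i) ∧
    {b : ℕ | (0 < b ∧ Level c b i) ∧ c u b = blue}.Finite} with hS
  set T : ℕ → Set ℕ := fun i => A i \ S i with hT
  have hSfin : ∀ i, (S i).Finite := fun i => S_finite c i
  have hTA : ∀ i, T i ⊆ A i := fun i => Set.diff_subset
  have hout : ∀ i, ∀ a ∈ T i, {b : ℕ | b ∈ T i ∧ c a b = blue}.Infinite := by
    intro i a haT
    obtain ⟨haA, haS⟩ := haT
    have h1 : {b : ℕ | (0 < b ∧ Level c b i) ∧ c a b = blue}.Infinite := by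
      by_contra hfin
      exact haS ⟨haA, Set.not_infinite.1 hfin⟩
    apply (h1.diff (hSfin i)).mono
    rintro b ⟨⟨hbA, hbc⟩, hbS⟩
    exact ⟨⟨hbA, hbS⟩, hbc⟩
  have hin : ∀ i, ∀ a ∈ T i, {b : ℕ | b ∈ T i ∧ c b a = red}.Finite := by
    intro i a haT
    apply (red_in_finite c (hTA i haT).2).subset
    rintro b ⟨hbT, hbc⟩
    exact ⟨(hTA i hbT).1, (hTA i hbT).2, hbc⟩
  have hAdisj : ∀ i j, i ≠ j → Disjoint (A i) (A j) := by
    intro i j hij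
    rw [Set.disjoint_left]
    rintro v ⟨_, hvi⟩ ⟨_, hvj⟩
    exact hij (level_unique c hvi hvj)
  set I : Finset ℕ := (Finset.range r).filter (fun i => (T i).Infinite) with hI
  have hcard : I.card ≤ r := le_trans (Finset.card_filter_le _ _) (by simp)
  have hpath : ∀ i : I, ∃ f, InfPath c blue f ∧ Set.range f = T i := by
    rintro ⟨i, hi⟩
    simp only [hI, Finset.mem_filter] at hi
    exact greedy c (T i) hi.2 (fun a ha => (hTA i ha).1) (hout i) (hin i)
  choose G hG1 hG2 using hpath
  refine ⟨I.card, fun a => G (I.equivFin.symm a), hcard, fun a => hG1 _, ?_, ?_⟩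
  · intro a b hab
    rw [hG2, hG2]
    have hij : ((I.equivFin.symm a : I) : ℕ) ≠ ((I.equivFin.symm b : I) : ℕ) := by
      intro hmm
      exact hab (I.equivFin.symm.injective (Subtype.ext hmm))
    exact Disjoint.mono (hTA _) (hTA _) (hAdisj _ _ hij)
  · apply Set.Finite.subset
      (s := ⋃ i ∈ Set.Iio r, S i ∪ (if (T i).Infinite then ∅ else T i))
    · apply Set.Finite.biUnion (Set.finite_Iio r)
      intro i _
      apply (hSfin i).union
      split
      · exact Set.finite_empty
      · exact Set.not_infinite.1 (by assumption)
    · rintro n ⟨hnpos, hn⟩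
      obtain ⟨i, hir, hLn⟩ := level_exists hr c h hnpos
      have hnA : n ∈ A i := ⟨hnpos, hLn⟩
      apply Set.mem_biUnion (show i ∈ Set.Iio r from hir)
      by_cases hnS : n ∈ S i
      · exact Or.inl hnS
      · have hnT : n ∈ T i := ⟨hnA, hnS⟩
        by_cases hTi : (T i).Infinite
        · exfalso
          have hiI : i ∈ I := Finset.mem_filter.2 ⟨Finset.mem_range.2 hir, hTi⟩
          have hcon := hn (I.equivFin ⟨i, hiI⟩)
          simp only [Equiv.symm_apply_apply, hG2 ⟨i, hiI⟩] at hcon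
          exact hcon hnT
        · rw [if_neg hTi]
          exact Or.inr hnT
end

section
/- Fix a 2-colouring of the complete symmetric digraph on ℕ⁺ with no red directed path of length r, in which every blue directed path has upper density at most 1/r; let A_i be the set of vertices whose longest outgoing red directed path has exactly i edges. Then for every pair i < j, there are only finitely many pairwise vertex-disjoint blue edges from A_j to A_i. -/
open Filter

section Lemmas
open scoped Classical

variable {c : ℕ → ℕ → Bool} {r : ℕ}

lemma blue_of_ne_red {a b : ℕ} (h : c a b ≠ red) : c a b = blue := by
  cases hab : c a b <;> simp [red, blue] at * <;> simp_all

lemma red_of_ne_blue {a b : ℕ} (h : c a b ≠ blue) : c a b = red := by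
  cases hab : c a b <;> simp [red, blue] at * <;> simp_all

lemma pathFrom_mono_s18 {v k k'} (h : PathFrom c red v k) (hk : k' ≤ k) :
    PathFrom c red v k' := by
  obtain ⟨l, ⟨hnd, hpos, hch⟩, hhead, hlen⟩ := h
  refine ⟨l.take (k' + 1), ⟨hnd.sublist (List.take_sublist _ _), fun x hx => hpos x (List.take_subset _ _ hx), hch.prefix (List.take_prefix _ _)⟩, ?_, ?_⟩
  · obtain ⟨t, rfl⟩ := List.head?_eq_some_iff.1 hhead
    simp
  · simp [hlen]; omega

lemma level_pos {v m} (h : Level c v m) : 0 < v := by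
  obtain ⟨l, ⟨hnd, hpos, hch⟩, hhead, hlen⟩ := h.1
  obtain ⟨t, rfl⟩ := List.head?_eq_some_iff.1 hhead
  exact hpos v (by simp)

lemma level_lt (h : NoPathOfLength c red r) {v m} (hm : Level c v m) : m < r := by
  by_contra hmr
  push_neg at hmr
  obtain ⟨l, hl, _, hlen⟩ := pathFrom_mono_s18 hm.1 hmr
  exact h ⟨l, hl, hlen⟩

lemma level_unique_s18 {v m m'} (h : Level c v m) (h' : Level c v m') : m = m' := by
  by_contra hne
  rcases Nat.lt_or_ge m m' with hlt | hge
  · exact h.2 (pathFrom_mono_s18 h'.1 hlt)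
  · exact h'.2 (pathFrom_mono_s18 h.1 (lt_of_le_of_ne hge (Ne.symm hne)))

lemma exists_level (h : NoPathOfLength c red r) (hr : 1 ≤ r) {v} (hv : 0 < v) :
    ∃ m, Level c v m := by
  have h0 : PathFrom c red v 0 := ⟨[v], ⟨by simp, by simpa, List.isChain_singleton _⟩, by simp, by simp⟩
  have hnr : ¬ PathFrom c red v r := fun ⟨l, hl, _, hlen⟩ => h ⟨l, hl, hlen⟩
  classical
  set P := fun k => PathFrom c red v k with hP
  have : ∃ m, P m ∧ ¬ P (m+1) := by
    by_contra hc
    push_neg at hc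
    have : ∀ m, P m := by
      intro m
      induction m with
      | zero => exact h0
      | succ n ih => exact hc n ih
    exact hnr (this r)
  exact this

lemma mem_take_of_red {l : List ℕ} {u lu v lv}
    (hl : FinPath c red l) (hhead : l.head? = some u) (hlen : l.length = lu + 1)
    (hv : Level c v lv) (hred : c v u = red) (hle : lv ≤ lu) :
    v ∈ l.take (lv + 1) := by
  by_contra hmem
  apply hv.2
  obtain ⟨hnd, hpos, hch⟩ := hl
  obtain ⟨t, rfl⟩ := List.head?_eq_some_iff.1 hhead
  refine ⟨v :: (u :: t).take (lv + 1), ⟨?_, ?_, ?_⟩, by simp, ?_⟩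
  · exact List.nodup_cons.2 ⟨hmem, hnd.sublist (List.take_sublist _ _)⟩
  · intro x hx
    rcases List.mem_cons.1 hx with rfl | hx'
    · exact level_pos hv
    · exact hpos x (List.take_subset _ _ hx')
  · rw [List.take_succ_cons]
    exact List.isChain_cons_cons.2 ⟨hred, hch.prefix ⟨t.drop lv, by simp⟩⟩
  · simp at hlen ⊢; omega

lemma red_in_finite_s18 {u lu lv} (hu : Level c u lu) (hle : lv ≤ lu) :
    {v | Level c v lv ∧ c v u = red}.Finite := by
  obtain ⟨l, hl, hhead, hlen⟩ := hu.1
  apply Set.Finite.subset (l.take (lv + 1)).finite_toSet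
  intro v ⟨hv, hred⟩
  exact mem_take_of_red hl hhead hlen hv hred hle

lemma bad_finite {lu lv} (hle : lv ≤ lu) {U : Set ℕ} (hU : U.Infinite)
    (hUl : ∀ u ∈ U, Level c u lu) :
    {v | Level c v lv ∧ {u ∈ U | c v u = blue}.Finite}.Finite := by
  by_contra hinf
  replace hinf : Set.Infinite _ := hinf
  obtain ⟨s, hs, hcard⟩ := hinf.exists_subset_card_eq (lv + 2)
  have hfin : (⋃ v ∈ s, {u ∈ U | c v u = blue}).Finite := by
    apply Set.Finite.biUnion s.finite_toSet
    intro v hv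
    exact (hs hv).2
  obtain ⟨u, hu⟩ := (hU.diff hfin).nonempty
  have huU : u ∈ U := hu.1
  have hulev : Level c u lu := hUl u huU
  obtain ⟨l, hl, hhead, hlen⟩ := hulev.1
  have hsub : s ⊆ (l.take (lv + 1)).toFinset := by
    intro v hvs
    rw [List.mem_toFinset]
    have hred : c v u = red := by
      apply red_of_ne_blue
      intro hb
      exact hu.2 (Set.mem_biUnion hvs ⟨huU, hb⟩)
    exact mem_take_of_red hl hhead hlen (hs hvs).1 hred hle
  have := Finset.card_le_card hsub
  have h1 : (l.take (lv + 1)).toFinset.card ≤ lv + 1 :=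
    (List.toFinset_card_le _).trans (by simp)
  omega

lemma builder (T B E : Set ℕ) (hTpos : ∀ v ∈ T, 0 < v) (hB : B.Infinite)
    (w0 : ℕ) (hw0T : w0 ∈ T) (hw0E : w0 ∈ E)
    (ext : ∀ F : Finset ℕ, ∀ w ∈ E, ∀ z ∈ B, z ∉ F →
      ∃ q : List ℕ, q.Nodup ∧ (∀ x ∈ q, x ∈ T ∧ x ∉ F) ∧
        List.Chain (fun a b => c a b = blue) w q ∧ z ∈ q ∧
        ∃ e, q.getLast? = some e ∧ e ∈ E) :
    ∃ f : ℕ → ℕ, InfPath c blue f ∧ Set.range f ⊆ T ∧ B ⊆ Set.range f := by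
  classical
  set Inv : List ℕ → Prop := fun l =>
    l.Nodup ∧ (∀ x ∈ l, x ∈ T) ∧ l.Chain' (fun a b => c a b = blue) ∧
    ∃ e, l.getLast? = some e ∧ e ∈ E with hInv
  have hB' : {x | x ∈ B}.Infinite := by rwa [Set.setOf_mem_eq]
  have hnth : ∀ t, Nat.nth (· ∈ B) t ∈ B := fun t => Nat.nth_mem_of_infinite hB' t
  have step : ∀ t : ℕ, ∀ l : List ℕ, Inv l →
      ∃ l', Inv l' ∧ l <+: l' ∧ Nat.nth (· ∈ B) t ∈ l' := by
    intro t l hl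
    set z := Nat.nth (· ∈ B) t with hz'
    by_cases hz : z ∈ l
    · exact ⟨l, hl, List.prefix_refl l, hz⟩
    · obtain ⟨hnd, hT, hch, w, hw, hwE⟩ := hl
      obtain ⟨q, hqnd, hqT, hqch, hzq, e, he, heE⟩ :=
        ext l.toFinset w hwE z (hnth t) (by simpa using hz)
      have hqne : q ≠ [] := fun h => by simp [h] at hzq
      refine ⟨l ++ q, ⟨?_, ?_, ?_, ?_⟩, List.prefix_append l q, by simp [hzq]⟩
      · refine hnd.append hqnd ?_
        intro x hx hxq
        exact (hqT x hxq).2 (List.mem_toFinset.2 hx)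
      · intro x hx
        rcases List.mem_append.1 hx with hx | hx
        · exact hT x hx
        · exact (hqT x hx).1
      · rw [show List.Chain' _ (l ++ q) = List.IsChain _ (l ++ q) from rfl, List.isChain_append]
        refine ⟨hch, ?_, ?_⟩
        · have : List.Chain' (fun a b => c a b = blue) (w :: q) := hqch
          exact this.tail
        · intro x hx y hy
          rw [hw, Option.mem_some_iff] at hx
          subst hx
          cases q with
          | nil => simp at hy
          | cons a q' =>
            rw [List.head?_cons, Option.mem_some_iff] at hy
            subst hy
            exact (List.chain_cons.1 hqch).1
      · refine ⟨e, ?_, heE⟩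
        rw [List.getLast?_append_of_ne_nil _ hqne]
        exact he
  choose g hg1 hg2 hg3 using step
  set L : ℕ → {l : List ℕ // Inv l} :=
    fun t => Nat.rec (motive := fun _ => {l : List ℕ // Inv l})
      ⟨[w0], ⟨by simp, by simpa using hw0T, List.isChain_singleton _, ⟨w0, by simp, hw0E⟩⟩⟩
      (fun t p => ⟨g t p.1 p.2, hg1 t p.1 p.2⟩) t with hL
  have hLsucc : ∀ t, (L (t+1)).1 = g t (L t).1 (L t).2 := fun t => rfl
  have hpre : ∀ t, (L t).1 <+: (L (t+1)).1 := by
    intro t; rw [hLsucc]; exact hg2 t (L t).1 (L t).2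
  have hpre' : ∀ s t, s ≤ t → (L s).1 <+: (L t).1 := by
    intro s t hst
    induction t with
    | zero => cases Nat.le_zero.1 hst; exact List.prefix_refl _
    | succ n ih =>
      rcases Nat.lt_or_ge s (n+1) with hlt | hge
      · exact (ih (Nat.lt_succ_iff.1 hlt)).trans (hpre n)
      · cases Nat.le_antisymm hst hge; exact List.prefix_refl _
  have hmemL : ∀ t, Nat.nth (· ∈ B) t ∈ (L (t+1)).1 := by
    intro t; rw [hLsucc]; exact hg3 t (L t).1 (L t).2
  have hlen : ∀ t, t ≤ (L t).1.length := by
    intro t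
    have himg : (Finset.range t).image (Nat.nth (· ∈ B)) ⊆ (L t).1.toFinset := by
      intro x hx
      obtain ⟨s, hs, rfl⟩ := Finset.mem_image.1 hx
      rw [List.mem_toFinset]
      exact (hpre' (s+1) t (Finset.mem_range.1 hs)).subset (hmemL s)
    have hcard := Finset.card_le_card himg
    rw [Finset.card_image_of_injective _ (Nat.nth_injective hB'), Finset.card_range] at hcard
    exact hcard.trans (List.toFinset_card_le _)
  have hlenlt : ∀ k, k < (L (k+1)).1.length :=
    fun k => Nat.lt_of_lt_of_le (Nat.lt_succ_self k) (hlen (k+1))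
  set f : ℕ → ℕ := fun k => (L (k+1)).1.getD k 0 with hf
  have hfeq : ∀ k t (h : k < (L t).1.length), f k = (L t).1[k] := by
    intro k t hk
    rw [hf]
    simp only
    rw [List.getD_eq_getElem _ _ (hlenlt k)]
    rcases Nat.le_total (k+1) t with hle | hle
    · exact List.IsPrefix.getElem (hpre' (k+1) t hle) (hlenlt k)
    · exact (List.IsPrefix.getElem (hpre' t (k+1) hle) hk).symm
  have hfT : ∀ k, f k ∈ T := by
    intro k
    rw [hfeq k (k+1) (hlenlt k)]
    exact (L (k+1)).2.2.1 _ (List.getElem_mem _)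
  refine ⟨f, ⟨?_, ?_, ?_⟩, ?_, ?_⟩
  · intro a b hab
    have h1 : a < (L (max a b + 1)).1.length :=
      lt_of_lt_of_le (Nat.lt_succ_of_le (le_max_left a b)) (hlen (max a b + 1))
    have h2 : b < (L (max a b + 1)).1.length :=
      lt_of_lt_of_le (Nat.lt_succ_of_le (le_max_right a b)) (hlen (max a b + 1))
    rw [hfeq a (max a b + 1) h1, hfeq b (max a b + 1) h2] at hab
    exact ((L (max a b + 1)).2.1.getElem_inj_iff).1 hab
  · intro k
    exact hTpos _ (hfT k)
  · intro k
    have h1 : k < (L (k+2)).1.length := lt_of_lt_of_le (by omega : k < k + 2) (hlen (k+2))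
    have h2 : k + 1 < (L (k+2)).1.length :=
      lt_of_lt_of_le (by omega : k + 1 < k + 2) (hlen (k+2))
    rw [hfeq k (k+2) h1, hfeq (k+1) (k+2) h2]
    have := List.isChain_iff_getElem.1 (L (k+2)).2.2.2.1 k (by omega)
    simpa [List.get_eq_getElem] using this
  · rintro y ⟨k, rfl⟩
    exact hfT k
  · intro b hb
    have : b ∈ Set.range (Nat.nth (· ∈ B)) := by
      rw [Nat.range_nth_of_infinite hB']; exact hb
    obtain ⟨t, rfl⟩ := this
    obtain ⟨p, hp, hpe⟩ := List.mem_iff_getElem.1 (hmemL t)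
    exact ⟨p, by rw [hfeq p (t+1) hp]; exact hpe⟩

lemma upDens_eq_s18 (A : Set ℕ) :
    upDens A =
      limsup (fun n : ℕ => (((Finset.Icc 1 n).filter (fun m => m ∈ A)).card : ℝ) / n) atTop :=
  rfl

lemma densSeq_nonneg (A : Set ℕ) (n : ℕ) :
    0 ≤ (((Finset.Icc 1 n).filter (fun m => m ∈ A)).card : ℝ) / n := by positivity

lemma densSeq_le_one (A : Set ℕ) (n : ℕ) :
    (((Finset.Icc 1 n).filter (fun m => m ∈ A)).card : ℝ) / n ≤ 1 := by
  rcases Nat.eq_zero_or_pos n with rfl | hn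
  · simp
  · rw [div_le_one (by positivity)]
    have h1 := Finset.card_filter_le (Finset.Icc 1 n) (fun m => m ∈ A)
    have h2 : (Finset.Icc 1 n).card = n := by
      rw [Nat.card_Icc]; omega
    exact_mod_cast h1.trans_eq h2

lemma densSeq_bddAbove (A : Set ℕ) :
    IsBoundedUnder (· ≤ ·) atTop
      (fun n : ℕ => (((Finset.Icc 1 n).filter (fun m => m ∈ A)).card : ℝ) / n) :=
  isBoundedUnder_of ⟨1, densSeq_le_one A⟩

lemma densSeq_cobdd (A : Set ℕ) :
    IsCoboundedUnder (· ≤ ·) atTop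
      (fun n : ℕ => (((Finset.Icc 1 n).filter (fun m => m ∈ A)).card : ℝ) / n) :=
  (isBoundedUnder_of ⟨0, densSeq_nonneg A⟩ : IsBoundedUnder (· ≥ ·) atTop _).isCoboundedUnder_le

lemma upDens_mono {A B : Set ℕ} (h : A ⊆ B) : upDens A ≤ upDens B := by
  rw [upDens_eq_s18, upDens_eq_s18]
  refine limsup_le_limsup (Eventually.of_forall fun n => ?_) (densSeq_cobdd A) (densSeq_bddAbove B)
  simp only
  rw [div_eq_mul_inv, div_eq_mul_inv]
  refine mul_le_mul_of_nonneg_right ?_ (by positivity)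
  have hcc : (Finset.filter (fun m => m ∈ A) (Finset.Icc 1 n)).card ≤
      (Finset.filter (fun m => m ∈ B) (Finset.Icc 1 n)).card := by
    refine Finset.card_le_card fun x hx => ?_
    simp only [Finset.mem_filter] at *
    exact ⟨hx.1, h hx.2⟩
  exact_mod_cast hcc

lemma upDens_le_of_diff_finite {X Y : Set ℕ} (h : (X \ Y).Finite) :
    upDens X ≤ upDens Y := by
  by_contra hc
  push_neg at hc
  set ε := (upDens X - upDens Y) / 2 with hε
  have hε0 : 0 < ε := by rw [hε]; linarith
  have hev1 : ∀ᶠ n : ℕ in atTop,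
      (((Finset.Icc 1 n).filter (fun m => m ∈ Y)).card : ℝ) / n < upDens Y + ε / 2 := by
    apply eventually_lt_of_limsup_lt _ (densSeq_bddAbove Y)
    rw [← upDens_eq_s18]; linarith
  have hev2 : ∀ᶠ n : ℕ in atTop, (h.toFinset.card : ℝ) / n < ε / 2 := by
    have := tendsto_const_div_atTop_nhds_zero_nat (h.toFinset.card : ℝ)
    exact this.eventually (gt_mem_nhds (by positivity))
  have hkey : ∀ n : ℕ,
      (((Finset.Icc 1 n).filter (fun m => m ∈ X)).card : ℝ) / n ≤
        (((Finset.Icc 1 n).filter (fun m => m ∈ Y)).card : ℝ) / n + (h.toFinset.card : ℝ) / n := by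
    intro n
    rw [← add_div]
    gcongr
    have hsub : (Finset.Icc 1 n).filter (fun m => m ∈ X) ⊆
        ((Finset.Icc 1 n).filter (fun m => m ∈ Y)) ∪ h.toFinset := by
      intro x hx
      simp only [Finset.mem_filter, Finset.mem_union, Set.Finite.mem_toFinset] at *
      by_cases hxy : x ∈ Y
      · exact Or.inl ⟨hx.1, hxy⟩
      · exact Or.inr ⟨hx.2, hxy⟩
    calc ((((Finset.Icc 1 n).filter (fun m => m ∈ X)).card : ℝ)) ≤
        ((((Finset.Icc 1 n).filter (fun m => m ∈ Y)) ∪ h.toFinset).card : ℝ) := by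
          exact_mod_cast Finset.card_le_card hsub
      _ ≤ _ := by exact_mod_cast Finset.card_union_le _ _
  have : upDens X ≤ upDens Y + ε := by
    rw [upDens_eq_s18]
    apply limsup_le_of_le (densSeq_cobdd X)
    filter_upwards [hev1, hev2] with n h1 h2
    calc (((Finset.Icc 1 n).filter (fun m => m ∈ X)).card : ℝ) / n ≤ _ := hkey n
      _ ≤ (upDens Y + ε / 2) + ε / 2 := by linarith
      _ = upDens Y + ε := by ring
  rw [hε] at this
  linarith

lemma upDens_le_zero_of_finite {A : Set ℕ} (h : A.Finite) : upDens A ≤ 0 := by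
  rw [upDens_eq_s18]
  have htend : Tendsto (fun n : ℕ => (((Finset.Icc 1 n).filter (fun m => m ∈ A)).card : ℝ) / n)
      atTop (nhds 0) := by
    apply tendsto_of_tendsto_of_tendsto_of_le_of_le tendsto_const_nhds
      (tendsto_const_div_atTop_nhds_zero_nat (h.toFinset.card : ℝ))
    · exact fun n => densSeq_nonneg A n
    · intro n
      simp only
      rw [div_eq_mul_inv, div_eq_mul_inv]
      refine mul_le_mul_of_nonneg_right ?_ (by positivity)
      have hcc : ((Finset.Icc 1 n).filter (fun m => m ∈ A)).card ≤ h.toFinset.card := by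
        refine Finset.card_le_card fun x hx => ?_
        rw [Set.Finite.mem_toFinset]
        exact (Finset.mem_filter.1 hx).2
      exact_mod_cast hcc
  rw [htend.limsup_eq]

lemma level_upDens_le (h : NoPathOfLength c red r)
    (hblue : ∀ f : ℕ → ℕ, InfPath c blue f → upDens (Set.range f) ≤ 1 / (r : ℝ))
    (m : ℕ) : upDens {v | Level c v m} ≤ 1 / (r : ℝ) := by
  classical
  set A := {v | Level c v m} with hA
  by_cases hfin : A.Finite
  · exact (upDens_le_zero_of_finite hfin).trans (by positivity)
  · replace hfin : A.Infinite := hfin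
    set Bad := {v | Level c v m ∧ {u ∈ A | c v u = blue}.Finite} with hBad
    have hBadfin : Bad.Finite := bad_finite le_rfl hfin (fun u hu => hu)
    set B := A \ Bad with hB
    have hBinf : B.Infinite := hfin.diff hBadfin
    obtain ⟨w0, hw0⟩ := hBinf.nonempty
    have ext : ∀ F : Finset ℕ, ∀ w ∈ B, ∀ z ∈ B, z ∉ F →
        ∃ q : List ℕ, q.Nodup ∧ (∀ x ∈ q, x ∈ A ∧ x ∉ F) ∧
          List.Chain (fun a b => c a b = blue) w q ∧ z ∈ q ∧
          ∃ e, q.getLast? = some e ∧ e ∈ B := by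
      intro F w hw z hz hzF
      have hwg : {u ∈ A | c w u = blue}.Infinite := by
        by_contra hc
        rw [Set.not_infinite] at hc
        exact hw.2 ⟨hw.1, hc⟩
      have hredfin : {x | Level c x m ∧ c x z = red}.Finite :=
        red_in_finite_s18 hz.1 le_rfl
      obtain ⟨x, hx⟩ :=
        (hwg.diff ((hredfin.union F.finite_toSet).union (Set.finite_singleton z))).nonempty
      obtain ⟨⟨hxA, hwx⟩, hxex⟩ := hx
      simp only [Set.mem_union, Set.mem_singleton_iff, Finset.mem_coe, not_or] at hxex
      obtain ⟨⟨hxred, hxF⟩, hxz⟩ := hxex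
      have hxzblue : c x z = blue := by
        apply blue_of_ne_red
        intro hr'
        exact hxred ⟨hxA, hr'⟩
      refine ⟨[x, z], by simp [hxz], ?_, ?_, by simp, ⟨z, by simp, hz⟩⟩
      · intro y hy
        rcases List.mem_cons.1 hy with rfl | hy'
        · exact ⟨hxA, hxF⟩
        · rcases List.mem_singleton.1 (by simpa using hy') with rfl
          exact ⟨hz.1, hzF⟩
      · exact List.Chain.cons hwx (List.Chain.cons hxzblue List.Chain.nil)
    obtain ⟨f, hf, hfT, hfB⟩ :=
      builder A B B (fun v hv => level_pos hv) hBinf w0 hw0.1 hw0 ext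
    calc upDens A ≤ upDens B := upDens_le_of_diff_finite
          (hBadfin.subset (fun x hx => by
            simp only [hB, Set.mem_diff, not_and, not_not] at hx
            exact hx.2 hx.1))
      _ ≤ upDens (Set.range f) := upDens_mono hfB
      _ ≤ 1 / (r : ℝ) := hblue f hf

lemma le_upDens (A : Set ℕ) (a : ℝ)
    (hev : ∀ᶠ n : ℕ in atTop, ∀ k : ℕ,
      k = ((Finset.Icc 1 n).filter (fun m => m ∈ A)).card → a ≤ (k:ℝ)/n) :
    a ≤ upDens A := by
  rw [upDens_eq_s18]
  refine le_limsup_of_frequently_le ?_ (densSeq_bddAbove A)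
  exact (hev.mono (fun n hn => hn _ rfl)).frequently

end Lemmas


/-- If there is no red directed path of length `r` and every blue directed path has
upper density at most `1/r`, then for `i < j` any family of pairwise vertex-disjoint
blue edges from `A_j` to `A_i` is finite. -/
theorem stmt18 (r : ℕ) (hr : 1 ≤ r) (c : ℕ → ℕ → Bool) (h : NoPathOfLength c red r)
    (hblue : ∀ f : ℕ → ℕ, InfPath c blue f → upDens (Set.range f) ≤ 1 / (r : ℝ))
    (i j : ℕ) (hij : i < j)
    (M : Set (ℕ × ℕ))
    (hM : ∀ e ∈ M, Level c e.1 j ∧ Level c e.2 i ∧ e.1 ≠ e.2 ∧ c e.1 e.2 = blue)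
    (hdisj : ∀ e ∈ M, ∀ e' ∈ M, e ≠ e' →
      e.1 ≠ e'.1 ∧ e.1 ≠ e'.2 ∧ e.2 ≠ e'.1 ∧ e.2 ≠ e'.2) :
    M.Finite := by
  classical
  by_contra hfin
  replace hfin : M.Infinite := hfin
  obtain ⟨e0, he0⟩ := hfin.nonempty
  have hjr : j < r := level_lt h (hM e0 he0).1
  have hir : i < r := lt_trans hij hjr
  have hijne : i ≠ j := Nat.ne_of_lt hij
  have hr2 : 2 ≤ r := by omega
  have hrR : (0:ℝ) < r := by exact_mod_cast Nat.lt_of_lt_of_le Nat.zero_lt_one hr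
  have hfst : Set.InjOn Prod.fst M := by
    intro e he e' he' hee
    by_contra hne
    exact (hdisj e he e' he' hne).1 hee
  have hsnd : Set.InjOn Prod.snd M := by
    intro e he e' he' hee
    by_contra hne
    exact (hdisj e he e' he' hne).2.2.2 hee
  set Ai := {v | Level c v i} with hAi
  set Aj := {v | Level c v j} with hAj
  have hAjinf : Aj.Infinite := by
    refine Set.Infinite.mono ?_ (hfin.image hfst)
    rintro _ ⟨e, he, rfl⟩
    exact (hM e he).1
  have hAiinf : Ai.Infinite := by
    refine Set.Infinite.mono ?_ (hfin.image hsnd)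
    rintro _ ⟨e, he, rfl⟩
    exact (hM e he).2.1
  -- Bad vertices of level i
  set BadI : Set ℕ := {v | Level c v i ∧ {u ∈ Ai | c v u = blue}.Finite} ∪
      {v | Level c v i ∧ {u ∈ Aj | c v u = blue}.Finite} with hBadI
  have hBadIfin : BadI.Finite :=
    (bad_finite (le_refl i) hAiinf (fun u hu => hu)).union
      (bad_finite (le_of_lt hij) hAjinf (fun u hu => hu))
  -- Edges whose endpoint is good
  set M' := {e ∈ M | e.2 ∉ BadI} with hM'
  have hM'sub : M' ⊆ M := Set.sep_subset _ _
  have hM'inf : M'.Infinite := by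
    have hdfin : (M \ M').Finite := by
      refine Set.Finite.of_finite_image (f := Prod.snd) ?_ (hsnd.mono Set.diff_subset)
      refine hBadIfin.subset ?_
      rintro _ ⟨e, he, rfl⟩
      simp only [hM', Set.mem_diff, Set.mem_setOf_eq, Set.mem_sep_iff, not_and, not_not] at he
      exact he.2 he.1
    refine Set.Infinite.mono ?_ (hfin.diff hdfin)
    rintro e ⟨heM, hnd⟩
    by_contra hmem
    exact hnd ⟨heM, hmem⟩
  set U' := Prod.fst '' M' with hU'
  have hU'inf : U'.Infinite := hM'inf.image (hfst.mono hM'sub)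
  have hU'sub : ∀ u ∈ U', Level c u j := by
    rintro _ ⟨e, he, rfl⟩
    exact (hM e (hM'sub he)).1
  set BadJ := {v | Level c v j ∧ {u ∈ U' | c v u = blue}.Finite} with hBadJ
  have hBadJfin : BadJ.Finite := bad_finite (le_refl j) hU'inf hU'sub
  set T : Set ℕ := Ai ∪ Aj with hT
  set E : Set ℕ := Ai \ BadI with hE
  set B : Set ℕ := (Ai \ BadI) ∪ (Aj \ BadJ) with hB
  have hEinf : E.Infinite := hAiinf.diff hBadIfin
  obtain ⟨w0, hw0⟩ := hEinf.nonempty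
  have hBinf : B.Infinite := hEinf.mono Set.subset_union_left
  have hTpos : ∀ v ∈ T, 0 < v := by
    rintro v (hv | hv)
    · exact level_pos hv
    · exact level_pos hv
  -- the extension property
  have ext : ∀ F : Finset ℕ, ∀ w ∈ E, ∀ z ∈ B, z ∉ F →
      ∃ q : List ℕ, q.Nodup ∧ (∀ x ∈ q, x ∈ T ∧ x ∉ F) ∧
        List.Chain (fun a b => c a b = blue) w q ∧ z ∈ q ∧
        ∃ e, q.getLast? = some e ∧ e ∈ E := by
    intro F w hw z hz hzF
    have hwAi : Level c w i := hw.1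
    have hwgI : {u ∈ Ai | c w u = blue}.Infinite := by
      by_contra hc
      rw [Set.not_infinite] at hc
      exact hw.2 (Or.inl ⟨hwAi, hc⟩)
    have hwgJ : {u ∈ Aj | c w u = blue}.Infinite := by
      by_contra hc
      rw [Set.not_infinite] at hc
      exact hw.2 (Or.inr ⟨hwAi, hc⟩)
    rcases hz with hzi | hzj
    · -- target in level i
      have hredfin : {x | Level c x i ∧ c x z = red}.Finite :=
        red_in_finite_s18 hzi.1 (le_refl i)
      obtain ⟨x, hx⟩ :=
        (hwgI.diff ((hredfin.union F.finite_toSet).union (Set.finite_singleton z))).nonempty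
      obtain ⟨⟨hxA, hwx⟩, hxex⟩ := hx
      simp only [Set.mem_union, Set.mem_singleton_iff, Finset.mem_coe, not_or] at hxex
      obtain ⟨⟨hxred, hxF⟩, hxz⟩ := hxex
      have hxzblue : c x z = blue := blue_of_ne_red (fun hr' => hxred ⟨hxA, hr'⟩)
      refine ⟨[x, z], by simp [hxz], ?_, ?_, by simp, ⟨z, by simp, hzi⟩⟩
      · intro y hy
        rcases List.mem_cons.1 hy with rfl | hy'
        · exact ⟨Or.inl hxA, hxF⟩
        · rcases List.mem_singleton.1 (by simpa using hy') with rfl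
          exact ⟨Or.inl hzi.1, hzF⟩
      · exact List.Chain.cons hwx (List.Chain.cons hxzblue List.Chain.nil)
    · -- target in level j
      have hzj' : Level c z j := hzj.1
      have hredfin : {x | Level c x j ∧ c x z = red}.Finite :=
        red_in_finite_s18 hzj' (le_refl j)
      obtain ⟨x, hx⟩ :=
        (hwgJ.diff ((hredfin.union F.finite_toSet).union (Set.finite_singleton z))).nonempty
      obtain ⟨⟨hxA, hwx⟩, hxex⟩ := hx
      simp only [Set.mem_union, Set.mem_singleton_iff, Finset.mem_coe, not_or] at hxex
      obtain ⟨⟨hxred, hxF⟩, hxz⟩ := hxex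
      have hxzblue : c x z = blue := blue_of_ne_red (fun hr' => hxred ⟨hxA, hr'⟩)
      -- now find a matching edge to come back to level i
      have hzgood : {u ∈ U' | c z u = blue}.Infinite := by
        by_contra hc
        rw [Set.not_infinite] at hc
        exact hzj.2 ⟨hzj', hc⟩
      have hMEinf : {e ∈ M' | c z e.1 = blue}.Infinite := by
        apply Set.Infinite.of_image (f := Prod.fst)
        refine Set.Infinite.mono ?_ hzgood
        rintro u ⟨⟨e, he, rfl⟩, hblu⟩
        exact ⟨e, ⟨he, hblu⟩, rfl⟩
      set S : Set ℕ := (↑F : Set ℕ) ∪ {x, z, w} with hS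
      have hSfin : S.Finite := F.finite_toSet.union (((Set.finite_singleton w).insert z).insert x)
      have hex1 : {e : ℕ × ℕ | e ∈ M ∧ e.1 ∈ S}.Finite := by
        refine Set.Finite.of_finite_image (f := Prod.fst) ?_ (hfst.mono (fun e he => he.1)) 
        refine hSfin.subset ?_
        rintro _ ⟨e, he, rfl⟩
        exact he.2
      have hex2 : {e : ℕ × ℕ | e ∈ M ∧ e.2 ∈ S}.Finite := by
        refine Set.Finite.of_finite_image (f := Prod.snd) ?_ (hsnd.mono (fun e he => he.1))
        refine hSfin.subset ?_
        rintro _ ⟨e, he, rfl⟩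
        exact he.2
      obtain ⟨e, he⟩ := (hMEinf.diff (hex1.union hex2)).nonempty
      obtain ⟨⟨heM', hzeblue⟩, heex⟩ := he
      have heM : e ∈ M := hM'sub heM'
      simp only [Set.mem_union, Set.mem_setOf_eq, not_or, not_and] at heex
      have he1S : e.1 ∉ S := heex.1 heM
      have he2S : e.2 ∉ S := heex.2 heM
      simp only [hS, Set.mem_union, Set.mem_insert_iff, Set.mem_singleton_iff, Finset.mem_coe,
        not_or] at he1S he2S
      obtain ⟨he1F, he1x, he1z, he1w⟩ := he1S
      obtain ⟨he2F, he2x, he2z, he2w⟩ := he2S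
      obtain ⟨hlev1, hlev2, hne12, hblue12⟩ := hM e heM
      have he2E : e.2 ∈ E := ⟨hlev2, heM'.2⟩
      refine ⟨[x, z, e.1, e.2], ?_, ?_, ?_, by simp, ⟨e.2, by simp, he2E⟩⟩
      · simp only [List.nodup_cons, List.mem_cons, List.mem_singleton, List.not_mem_nil,
          or_false, List.nodup_nil, and_true, List.mem_singleton]
        refine ⟨?_, ?_, ?_⟩
        · push_neg
          exact ⟨hxz, fun hh => he1x hh.symm, fun hh => he2x hh.symm⟩
        · push_neg
          exact ⟨fun hh => he1z hh.symm, fun hh => he2z hh.symm⟩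
        · exact ⟨hne12, not_false⟩
      · intro y hy
        simp only [List.mem_cons, List.not_mem_nil, or_false] at hy
        rcases hy with rfl | rfl | rfl | rfl
        · exact ⟨Or.inr hxA, hxF⟩
        · exact ⟨Or.inr hzj', hzF⟩
        · exact ⟨Or.inr hlev1, he1F⟩
        · exact ⟨Or.inl hlev2, he2F⟩
      · exact List.Chain.cons hwx (List.Chain.cons hxzblue
          (List.Chain.cons hzeblue (List.Chain.cons hblue12 List.Chain.nil)))
  obtain ⟨f, hf, hfT, hfB⟩ := builder T B E hTpos hBinf w0 (Or.inl hw0.1) hw0 ext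
  have hupIJ : upDens (Ai ∪ Aj) ≤ 1 / (r:ℝ) := by
    have hd : ((Ai ∪ Aj) \ B).Finite := by
      refine (hBadIfin.union hBadJfin).subset ?_
      rintro v ⟨hv | hv, hvB⟩
      · simp only [hB, Set.mem_union, Set.mem_diff, not_or, not_and, not_not] at hvB
        exact Or.inl (hvB.1 hv)
      · simp only [hB, Set.mem_union, Set.mem_diff, not_or, not_and, not_not] at hvB
        exact Or.inr (hvB.2 hv)
    calc upDens (Ai ∪ Aj) ≤ upDens B := upDens_le_of_diff_finite hd
      _ ≤ upDens (Set.range f) := upDens_mono hfB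
      _ ≤ 1 / (r:ℝ) := hblue f hf
  -- lower bound : 2/r ≤ upDens (Ai ∪ Aj)
  have hlow : 2 / (r:ℝ) ≤ upDens (Ai ∪ Aj) := by
    have hlvlex : ∀ v : ℕ, ∃ m, 0 < v → (m < r ∧ Level c v m) := by
      intro v
      by_cases hv : 0 < v
      · obtain ⟨m, hm⟩ := exists_level h hr hv
        exact ⟨m, fun _ => ⟨level_lt h hm, hm⟩⟩
      · exact ⟨0, fun hcc => absurd hcc hv⟩
    choose lvf hlvf using hlvlex
    set others := ((Finset.range r).erase i).erase j with hoth
    have hothcard : others.card = r - 2 := by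
      rw [hoth, Finset.card_erase_of_mem
          (Finset.mem_erase.2 ⟨Ne.symm hijne, Finset.mem_range.2 hjr⟩),
        Finset.card_erase_of_mem (Finset.mem_range.2 hir), Finset.card_range]
      omega
    have hothcardR : (others.card : ℝ) = (r:ℝ) - 2 := by
      rw [hothcard, Nat.cast_sub hr2]; norm_num
    have hinotin : i ∉ insert j others := by
      simp [hoth, hijne]
    have hjnotin : j ∉ others := by simp [hoth]
    have hins : Finset.range r = insert i (insert j others) := by
      rw [hoth, Finset.insert_erase
          (Finset.mem_erase.2 ⟨Ne.symm hijne, Finset.mem_range.2 hjr⟩),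
        Finset.insert_erase (Finset.mem_range.2 hir)]
    have hpart : ∀ n : ℕ, n = ∑ m ∈ Finset.range r,
        ((Finset.Icc 1 n).filter (fun x => x ∈ {v | Level c v m})).card := by
      intro n
      have hfib := Finset.card_eq_sum_card_fiberwise (s := Finset.Icc 1 n)
        (t := Finset.range r) (f := lvf) (fun x hx => by
          have hx1 : 0 < x := by
            rw [Finset.mem_coe, Finset.mem_Icc] at hx; omega
          exact Finset.mem_range.2 (hlvf x hx1).1)
      have hIcc : (Finset.Icc 1 n).card = n := by rw [Nat.card_Icc]; omega
      rw [hIcc] at hfib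
      refine hfib.trans (Finset.sum_congr rfl ?_)
      intro m _
      congr 1
      apply Finset.filter_congr
      intro x hx
      have hx1 : 0 < x := by rw [Finset.mem_Icc] at hx; omega
      obtain ⟨_, hlev⟩ := hlvf x hx1
      constructor
      · rintro rfl
        exact hlev
      · intro hxm
        exact (level_unique_s18 hlev hxm)
    by_contra hcon
    push_neg at hcon
    set L := upDens (Ai ∪ Aj) with hLdef
    set ε := (2/(r:ℝ) - L)/r with hεdef
    have hε : 0 < ε := div_pos (by linarith) hrR
    have hevm : ∀ m ∈ others, ∀ᶠ n : ℕ in atTop,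
        (((Finset.Icc 1 n).filter (fun x => x ∈ {v | Level c v m})).card : ℝ) / n
          < 1/(r:ℝ) + ε := by
      intro m _
      refine eventually_lt_of_limsup_lt ?_ (densSeq_bddAbove _)
      have h1 := level_upDens_le (c := c) h hblue m
      rw [upDens_eq_s18] at h1
      linarith
    have hall := (eventually_all_finset others).2 hevm
    have hkey : ∀ᶠ n : ℕ in atTop, L + ε ≤
        (((Finset.Icc 1 n).filter (fun x => x ∈ Ai ∪ Aj)).card : ℝ) / n := by
      filter_upwards [hall, eventually_ge_atTop 1] with n hn hn1
      have hnn : (0:ℝ) < n := by exact_mod_cast hn1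
      -- split of the total count
      have htotal : (n:ℝ) =
          ((Finset.Icc 1 n).filter (fun x => x ∈ Ai)).card
          + ((Finset.Icc 1 n).filter (fun x => x ∈ Aj)).card
          + ∑ m ∈ others, (((Finset.Icc 1 n).filter (fun x => x ∈ {v | Level c v m})).card : ℝ) := by
        have h0 := hpart n
        rw [hins, Finset.sum_insert hinotin, Finset.sum_insert hjnotin] at h0
        conv_lhs => rw [h0]
        push_cast
        ring
      have hcntIJ : (((Finset.Icc 1 n).filter (fun x => x ∈ Ai ∪ Aj)).card : ℝ)
          = ((Finset.Icc 1 n).filter (fun x => x ∈ Ai)).card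
            + ((Finset.Icc 1 n).filter (fun x => x ∈ Aj)).card := by
        have hdisj' : Disjoint ((Finset.Icc 1 n).filter (fun x => x ∈ Ai))
            ((Finset.Icc 1 n).filter (fun x => x ∈ Aj)) := by
          rw [Finset.disjoint_left]
          intro a ha haj
          rw [Finset.mem_filter] at ha haj
          exact hijne (level_unique_s18 ha.2 haj.2)
        have hsplit : (Finset.Icc 1 n).filter (fun x => x ∈ Ai ∪ Aj)
            = ((Finset.Icc 1 n).filter (fun x => x ∈ Ai))
              ∪ ((Finset.Icc 1 n).filter (fun x => x ∈ Aj)) := by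
          rw [← Finset.filter_or]
          apply Finset.filter_congr
          intro x _
          simp [Set.mem_union]
        rw [hsplit, Finset.card_union_of_disjoint hdisj']
        push_cast; ring
      set S := ∑ m ∈ others,
        (((Finset.Icc 1 n).filter (fun x => x ∈ {v | Level c v m})).card : ℝ) with hSdef
      have hSn : S / n = ∑ m ∈ others,
          (((Finset.Icc 1 n).filter (fun x => x ∈ {v | Level c v m})).card : ℝ) / n :=
        Finset.sum_div _ _ _
      have h5 : S / n ≤ ((r:ℝ) - 2) * (1/(r:ℝ) + ε) := by
        rw [hSn]
        calc ∑ m ∈ others,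
            (((Finset.Icc 1 n).filter (fun x => x ∈ {v | Level c v m})).card : ℝ) / n
            ≤ others.card • (1/(r:ℝ) + ε) :=
              Finset.sum_le_card_nsmul _ _ _ (fun m hm => le_of_lt (hn m hm))
          _ = (others.card : ℝ) * (1/(r:ℝ) + ε) := nsmul_eq_mul _ _
          _ = ((r:ℝ) - 2) * (1/(r:ℝ) + ε) := by rw [hothcardR]
      have h6 : (((Finset.Icc 1 n).filter (fun x => x ∈ Ai ∪ Aj)).card : ℝ) / n
          = 1 - S / n := by
        have hc2 : (((Finset.Icc 1 n).filter (fun x => x ∈ Ai ∪ Aj)).card : ℝ) = n - S := by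
          rw [hcntIJ]; rw [hSdef] at htotal ⊢; linarith
        rw [hc2, sub_div, div_self (ne_of_gt hnn)]
      have hexp : ((r:ℝ) - 2) * (1/(r:ℝ) + ε) = 1 - 2/(r:ℝ) + (r:ℝ)*ε - 2*ε := by
        field_simp
        ring
      have h2rL : (r:ℝ)*ε = 2/(r:ℝ) - L := by
        rw [hεdef]
        field_simp
      rw [h6]
      linarith
    have hfinal : L + ε ≤ L := by
      rw [hLdef]
      apply le_upDens
      filter_upwards [hkey] with n hn k hkeq
      rw [hkeq]
      convert hn using 4
      exact Finset.filter_congr_decidable _ _ _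
    linarith
  have hpos : (0:ℝ) < 1 / r := by positivity
  have h2r : (2:ℝ)/r = 2 * (1/r) := by ring
  linarith
end
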